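/- arXiv:1009.0110 — 9 statements merged into one kernel-verified Lean document; each statement's English description precedes it below -/
import Mathlib

section
/- Let E be a left R-module and {E_i}_{i∈I} a directed family of submodules of E. If the external direct sum ⊕_{i∈I} E_i is an injective R-module, then the submodule ∑_{i∈I} E_i of E is injective. -/
/-!
The sum `S = ∑ Eᵢ` is the image of `σ : ⨁ Eᵢ → S`, and by directedness every `m ∈ S` lies in a
single `Eⱼ`, so it has a preimage in `⨁ Eᵢ` whose annihilator contains that of `m`.
For such a `σ` out of a module `T` satisfying Baer's criterion, every map `f : I → S` from a left
ideal lifts through `σ`: by Zorn there is a maximal partial lift, and it is defined on all of `I`.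
Indeed a partial lift `g` on `D ⊊ I` extends to `a ∈ I \ D` by sending `a` to `t + t₀`, where
`r ↦ g (r • a)` on `{r | r • a ∈ D}` is `r ↦ r • t` by Baer's criterion for `T`, and `t₀` is such a
preimage of `f a - σ t`. Extending the lift to `R` by Baer's criterion for `T` once more and
composing with `σ` shows that `S` satisfies Baer's criterion.
-/

namespace LinearMap

variable {R T M : Type*} [Ring R] [AddCommGroup T] [Module R T] [AddCommGroup M] [Module R M]

def LiftsAnnihilators (σ : T →ₗ[R] M) : Prop :=
  ∀ m : M, ∃ t : T, σ t = m ∧ ∀ r : R, r • m = 0 → r • t = 0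

def IsPartialLift (σ : T →ₗ[R] M) {I : Ideal R} (f : I →ₗ[R] M) (g : R →ₗ.[R] T) : Prop :=
  ∀ x : g.domain, ∃ hx : (x : R) ∈ I, σ (g x) = f ⟨x, hx⟩

variable {σ : T →ₗ[R] M} {I : Ideal R} {f : I →ₗ[R] M}

theorem isPartialLift_bot : IsPartialLift σ f ⊥ := by
  rintro ⟨x, hx⟩
  obtain rfl : x = 0 := (Submodule.mem_bot R).mp hx
  exact ⟨I.zero_mem, by change σ 0 = f 0; simp⟩

theorem isPartialLift_sSup {c : Set (R →ₗ.[R] T)} (hne : c.Nonempty) (hc : DirectedOn (· ≤ ·) c)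
    (h : ∀ g ∈ c, IsPartialLift σ f g) : IsPartialLift σ f (LinearPMap.sSup c hc) := by
  rintro ⟨x, hx⟩
  obtain ⟨g, hgc, hxg⟩ := (LinearPMap.mem_domain_sSup_iff hne hc).mp hx
  obtain ⟨hxI, hσ⟩ := h g hgc ⟨x, hxg⟩
  exact ⟨hxI, by rw [← hσ, ← LinearPMap.sSup_apply hc hgc ⟨x, hxg⟩]⟩

theorem IsPartialLift.mem {g : R →ₗ.[R] T} (hg : IsPartialLift σ f g) {x : R}
    (hx : x ∈ g.domain) : x ∈ I :=
  (hg ⟨x, hx⟩).1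

theorem IsPartialLift.apply {g : R →ₗ.[R] T} (hg : IsPartialLift σ f g) (x : g.domain)
    (hx : (x : R) ∈ I) : σ (g x) = f ⟨x, hx⟩ :=
  (hg x).2

theorem IsPartialLift.exists_value (hT : Module.Baer R T) (hσ : σ.LiftsAnnihilators)
    {g : R →ₗ.[R] T} (hg : IsPartialLift σ f g) {a : R} (ha : a ∈ I) :
    ∃ t : T, σ t = f ⟨a, ha⟩ ∧ ∀ (r : R) (hr : r • a ∈ g.domain), r • t = g ⟨r • a, hr⟩ := by
  let K : Ideal R := g.domain.comap (LinearMap.toSpanSingleton R R a)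
  obtain ⟨h, hh⟩ := hT K (g.toFun ∘ₗ (LinearMap.toSpanSingleton R R a).submoduleComap g.domain)
  have h_apply (r : R) : h r = r • h 1 := by rw [← map_smul, smul_eq_mul, mul_one]
  obtain ⟨t₀, hσt₀, hann⟩ := hσ (f ⟨a, ha⟩ - σ (h 1))
  refine ⟨h 1 + t₀, by rw [map_add, hσt₀, add_sub_cancel], fun r hr => ?_⟩
  have hr_kills : r • f ⟨a, ha⟩ - r • σ (h 1) = 0 := by
    rw [← map_smul, ← map_smul, ← h_apply, hh r hr, sub_eq_zero]
    exact (hg.apply ⟨r • a, hr⟩ (I.smul_mem r ha)).symm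
  rw [smul_add, hann r ((smul_sub r _ _).trans hr_kills), add_zero, ← h_apply, hh r hr]
  rfl

theorem IsPartialLift.exists_extension (hT : Module.Baer R T) (hσ : σ.LiftsAnnihilators)
    {g : R →ₗ.[R] T} (hg : IsPartialLift σ f g) {a : R} (ha : a ∈ I) :
    ∃ g' : R →ₗ.[R] T, g ≤ g' ∧ a ∈ g'.domain ∧ IsPartialLift σ f g' := by
  obtain ⟨t, hσt, ht⟩ := hg.exists_value hT hσ ha
  have ht_zero (c : R) (hc : c • a = 0) : c • t = 0 := by
    rw [ht c (hc ▸ g.domain.zero_mem), ← g.map_zero]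
    exact congrArg g (Subtype.ext hc)
  let s : R →ₗ.[R] T := LinearPMap.mkSpanSingleton' a t ht_zero
  have hcompat : ∀ (x : g.domain) (y : s.domain), (x : R) = y → g x = s y := by
    rintro ⟨x, hx⟩ ⟨y, hy⟩ (rfl : x = y)
    obtain ⟨c, rfl⟩ := Submodule.mem_span_singleton.mp hy
    rw [LinearPMap.mkSpanSingleton'_apply, RingHom.id_apply, ht c hx]
  refine ⟨g.sup s hcompat, LinearPMap.left_le_sup _ _ _,
    Submodule.mem_sup_right (Submodule.mem_span_singleton_self a), ?_⟩
  rintro ⟨x, hx⟩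
  obtain ⟨d, hd, y, hy, rfl⟩ := Submodule.mem_sup.mp hx
  obtain ⟨c, rfl⟩ := Submodule.mem_span_singleton.mp hy
  have hdI := hg.mem hd
  refine ⟨I.add_mem hdI (I.smul_mem c ha), ?_⟩
  have hsup : g.sup s hcompat ⟨d + c • a, hx⟩ = g ⟨d, hd⟩ + s ⟨c • a, hy⟩ :=
    LinearPMap.sup_apply hcompat _ _ _ rfl
  rw [hsup, map_add, hg.apply ⟨d, hd⟩ hdI,
    LinearPMap.mkSpanSingleton'_apply, map_smul, hσt, ← map_smul, ← map_add]
  rfl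

theorem exists_isPartialLift_domain_eq (hT : Module.Baer R T) (hσ : σ.LiftsAnnihilators)
    (f : I →ₗ[R] M) : ∃ g : R →ₗ.[R] T, g.domain = I ∧ IsPartialLift σ f g := by
  obtain ⟨g, -, hg, hmax⟩ := zorn_le_nonempty₀ {g | IsPartialLift σ f g}
    (fun c hcS hc g hg => ⟨LinearPMap.sSup c hc.directedOn,
      isPartialLift_sSup ⟨g, hg⟩ _ fun g hg => hcS hg, fun _ => LinearPMap.le_sSup _⟩)
    ⊥ isPartialLift_bot
  refine ⟨g, le_antisymm (fun x hx => hg.mem hx) fun a ha => ?_, hg⟩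
  obtain ⟨g', hgg', hag', hg'⟩ := hg.exists_extension hT hσ ha
  exact (hmax hg' hgg').1 hag'

end LinearMap

theorem Module.Baer.of_liftsAnnihilators {R T M : Type*} [Ring R] [AddCommGroup T] [Module R T]
    [AddCommGroup M] [Module R M] {σ : T →ₗ[R] M} (hT : Module.Baer R T)
    (hσ : σ.LiftsAnnihilators) : Module.Baer R M := by
  intro I f
  obtain ⟨g, hdom, hg⟩ := LinearMap.exists_isPartialLift_domain_eq hT hσ f
  obtain ⟨h, hh⟩ := hT I (g.toFun ∘ₗ Submodule.inclusion hdom.ge)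
  refine ⟨σ ∘ₗ h, fun x hx => ?_⟩
  rw [LinearMap.comp_apply, hh x hx]
  exact hg.apply _ hx

theorem DirectSum.liftsAnnihilators_toModule_inclusion_iSup {R E ι : Type*} [Ring R]
    [AddCommGroup E] [Module R E] [DecidableEq ι] {Ei : ι → Submodule R E}
    (hdir : Directed (· ≤ ·) Ei) :
    (DirectSum.toModule R ι _ fun i => Submodule.inclusion (le_iSup Ei i)).LiftsAnnihilators := by
  intro m
  rcases isEmpty_or_nonempty ι with _ | _
  · refine ⟨0, ?_, fun r _ => smul_zero r⟩
    obtain ⟨m, hm⟩ := m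
    rw [iSup_of_empty, Submodule.mem_bot] at hm
    subst hm
    exact map_zero _
  obtain ⟨j, hj⟩ := (Submodule.mem_iSup_of_directed Ei hdir).mp m.2
  refine ⟨DirectSum.lof R ι (fun i => Ei i) j ⟨m, hj⟩, DirectSum.toModule_lof R j _, fun r hr => ?_⟩
  rw [← map_smul]
  convert map_zero (DirectSum.lof R ι (fun i => Ei i) j)
  exact Subtype.ext (congrArg Subtype.val hr :)

/-- If `E` is a left `R`-module and `{E_i}_{i ∈ ι}` is a directed
(monotone over a directed index set) family of submodules of `E` such that the
external direct sum `⊕_i E_i` is an injective `R`-module, then the submodule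
`∑_i E_i = ⨆ i, E_i` of `E` is injective. -/
theorem stmt0 {R : Type} [Ring R] {E : Type} [AddCommGroup E] [Module R E]
    {ι : Type} [Preorder ι] [IsDirected ι (· ≤ ·)]
    (Ei : ι → Submodule R E) (hmono : Monotone Ei)
    (hinj : Module.Injective R (DirectSum ι fun i => (Ei i : Type))) :
    Module.Injective R (⨆ i, Ei i : Submodule R E) := by
  classical
  exact (Module.Baer.of_injective hinj).of_liftsAnnihilators
    (DirectSum.liftsAnnihilators_toModule_inclusion_iSup hmono.directed_le) |>.injective
end

section
/- Let (T, F) be a torsion theory for R-Mod and let (T_cw, F_cw) be the induced torsion theory on representations of a quiver Q, where T_cw consists of representations X with X(v) torsion for all vertices v. Then a representation X lies in the torsion free class F_cw if and only if X(v) ∈ F for every vertex v. -/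
open CategoryTheory CategoryTheory.Limits

/-- A torsion theory `(T, F)` for the category of left `R`-modules. -/
structure TorsionTheory (R : Type) [Ring R] : Type 2 where
  T : ModuleCat.{0,0} R → Prop
  F : ModuleCat.{0,0} R → Prop
  hom_zero : ∀ (A B : ModuleCat.{0,0} R), T A → F B → ∀ f : A ⟶ B, f = 0
  mem_torsion : ∀ C : ModuleCat.{0,0} R, (∀ B, F B → ∀ f : C ⟶ B, f = 0) → T C
  mem_torsionFree : ∀ C : ModuleCat.{0,0} R, (∀ A, T A → ∀ f : A ⟶ C, f = 0) → F C

/-- The category of representations of a quiver (vertex type `V`) by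
left `R`-modules, realized as functors from the path category of `V`. -/
abbrev QRep (V : Type) [Quiver.{1} V] (R : Type) [Ring R] := Paths V ⥤ ModuleCat.{0,0} R

namespace CategoryTheory.Functor

variable {C : Type*} [Category C] {R : Type*} [Ring R] (X : C ⥤ ModuleCat R)

def ofSubmodules (S : ∀ c, Submodule R (X.obj c))
    (hS : ∀ ⦃c d : C⦄ (p : c ⟶ d), (S c).map (X.map p).hom ≤ S d) : C ⥤ ModuleCat R where
  obj c := ModuleCat.of R (S c)
  map {c d} p := ModuleCat.ofHom <|
    (X.map p).hom.restrict fun x hx => hS p (Submodule.mem_map_of_mem hx)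
  map_id c := by
    ext x
    exact congr($(X.map_id c) x.1)
  map_comp p q := by
    ext x
    exact congr($(X.map_comp p q) x.1)

def ofSubmodulesι (S : ∀ c, Submodule R (X.obj c))
    (hS : ∀ ⦃c d : C⦄ (p : c ⟶ d), (S c).map (X.map p).hom ≤ S d) : X.ofSubmodules S hS ⟶ X where
  app c := ModuleCat.ofHom (S c).subtype

variable {X} {A : ModuleCat R} {c : C} (f : A ⟶ X.obj c)

def generatedSubmodule (t : C) : Submodule R (X.obj t) :=
  ⨆ p : c ⟶ t, LinearMap.range (f ≫ X.map p).hom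

theorem map_generatedSubmodule_le ⦃t u : C⦄ (q : t ⟶ u) :
    (generatedSubmodule f t).map (X.map q).hom ≤ generatedSubmodule f u := by
  rw [generatedSubmodule, Submodule.map_iSup]
  refine iSup_le fun p => ?_
  rw [← LinearMap.range_comp]
  exact le_iSup_of_le (p ≫ q) (by simp [LinearMap.comp_assoc])

theorem range_le_generatedSubmodule : LinearMap.range f.hom ≤ generatedSubmodule f c :=
  le_iSup_of_le (𝟙 c) (by simp)

end CategoryTheory.Functor

namespace TorsionTheory

open Functor

variable {R : Type} [Ring R] (tt : TorsionTheory R)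

theorem T_range {A M : ModuleCat.{0,0} R} (hA : tt.T A) (φ : A ⟶ M) :
    tt.T (ModuleCat.of R (LinearMap.range φ.hom)) :=
  tt.mem_torsion _ fun B hB g => by
    have : Epi (ModuleCat.ofHom φ.hom.rangeRestrict) :=
      (ModuleCat.epi_iff_surjective _).2 φ.hom.surjective_rangeRestrict
    exact (cancel_epi (ModuleCat.ofHom φ.hom.rangeRestrict)).1 <| by
      rw [comp_zero]; exact tt.hom_zero _ _ hA hB _

theorem T_iSup {M : ModuleCat.{0,0} R} {ι : Sort*} (N : ι → Submodule R M)
    (hN : ∀ i, tt.T (ModuleCat.of R (N i))) : tt.T (ModuleCat.of R ↥(⨆ i, N i)) :=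
  tt.mem_torsion _ fun B hB g => by
    by_contra hg
    obtain ⟨_, ⟨i, rfl⟩, hi⟩ := LinearMap.exists_ne_zero_of_sSup_eq (f := g.hom)
      (fun h => hg (ModuleCat.hom_ext h)) (Set.range N) rfl
    exact hi congr(($(tt.hom_zero _ _ (hN i) hB
      (ModuleCat.ofHom (g.hom ∘ₗ Submodule.inclusion _)))).hom)

variable {C : Type*} [Category C]

theorem T_generatedSubmodule {X : C ⥤ ModuleCat.{0,0} R} {A : ModuleCat.{0,0} R} {c : C}
    (hA : tt.T A) (f : A ⟶ X.obj c) (t : C) :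
    tt.T (ModuleCat.of R (generatedSubmodule f t)) :=
  tt.T_iSup _ fun p => tt.T_range hA (f ≫ X.map p)

/-- A morphism `f : M ⟶ X(c)` out of a torsion module factors through the subrepresentation of
`X` generated by its image, which is componentwise torsion. This subrepresentation is the image
of the adjoint transpose `S_c M ⟶ X`; `S_c M` itself, a coproduct indexed by paths, need not
exist in `ModuleCat.{0}` since `Quiver.{1}` puts paths in `Type 1`. -/
theorem F_obj_of_forall_hom_eq_zero {X : C ⥤ ModuleCat.{0,0} R}
    (hX : ∀ A : C ⥤ ModuleCat.{0,0} R, (∀ c, tt.T (A.obj c)) → ∀ f : A ⟶ X, f = 0) (c : C) :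
    tt.F (X.obj c) :=
  tt.mem_torsionFree _ fun _ hM f => by
    have hι := hX _ (tt.T_generatedSubmodule hM f) (X.ofSubmodulesι _ (map_generatedSubmodule_le f))
    ext a
    exact congr(($hι).app c ⟨f a, range_le_generatedSubmodule f ⟨a, rfl⟩⟩)

theorem hom_eq_zero_of_forall_T_obj_of_forall_F_obj {A X : C ⥤ ModuleCat.{0,0} R}
    (hA : ∀ c, tt.T (A.obj c)) (hX : ∀ c, tt.F (X.obj c)) (f : A ⟶ X) : f = 0 := by
  ext c : 2
  exact tt.hom_zero _ _ (hA c) (hX c) _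

end TorsionTheory

/-- For the induced componentwise torsion theory on representations
of a quiver, a representation `X` is in the torsion free class `F_cw` (i.e. every
morphism to `X` from a componentwise torsion representation is zero) if and only
if `X(v)` is torsion free for every vertex `v`. -/
theorem stmt2 {V : Type} [Quiver.{1} V] {R : Type} [Ring R] (tt : TorsionTheory R)
    (X : QRep V R) :
    (∀ (A : QRep V R), (∀ v : V, tt.T (A.obj ((Paths.of V).obj v))) → ∀ f : A ⟶ X, f = 0) ↔
    (∀ v : V, tt.F (X.obj ((Paths.of V).obj v))) :=
  ⟨fun hX => tt.F_obj_of_forall_hom_eq_zero (C := Paths V) hX,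
    fun hX _ hA f => tt.hom_eq_zero_of_forall_T_obj_of_forall_F_obj (C := Paths V) hA hX f⟩
end

section
/- Let F be a class of objects in an abelian category closed under subobjects, let ψ: X' → X be an F-precover of an object X, and let Z be a subobject of X. Then the restriction ψ₁: ψ⁻¹(Z) → Z is an F-precover of Z. -/
open CategoryTheory CategoryTheory.Limits

/-- Let `F` be a class of objects of an abelian category closed
under subobjects, `ψ : X' ⟶ X` an `F`-precover of `X`, and `Z ⟶ X` a subobject
of `X`.  Then the preimage `ψ⁻¹(Z)` (the pullback of `Z` along `ψ`) lies in `F`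
and the induced morphism `ψ⁻¹(Z) ⟶ Z` is an `F`-precover of `Z`. -/
theorem stmt5 {C : Type*} [Category C] [Abelian C] (F : C → Prop)
    (hsub : ∀ ⦃A B : C⦄ (f : A ⟶ B), Mono f → F B → F A)
    {X' X Z : C} (ψ : X' ⟶ X) (hX' : F X')
    (hpre : ∀ (F' : C), F F' → ∀ g : F' ⟶ X, ∃ h : F' ⟶ X', h ≫ ψ = g)
    (z : Z ⟶ X) [Mono z] :
    F (pullback ψ z) ∧
      ∀ (F' : C), F F' → ∀ g : F' ⟶ Z,
        ∃ h : F' ⟶ pullback ψ z, h ≫ pullback.snd ψ z = g := by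
  -- `pullback.fst ψ z` is mono, being the base change of the mono `z`.
  refine ⟨hsub (pullback.fst ψ z) inferInstance hX', fun F' hF' g => ?_⟩
  obtain ⟨h, hh⟩ := hpre F' hF' (g ≫ z)
  exact ⟨pullback.lift h g hh, pullback.lift_snd h g hh⟩
end

section
/- Let X be an injective representation of a quiver Q and suppose every torsion free representation embeds into a torsion free injective representation. Then a morphism ψ: X' → X with X' torsion free is an F_cw-precover of X if and only if every morphism φ: Y → X with Y torsion free AND injective factors through ψ. -/
open CategoryTheory CategoryTheory.Limits

theorem Injective.exists_lift_of_mono_of_forall_lift {C : Type*} [Category C]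
    {X X' Y E : C} [Injective X] (ψ : X' ⟶ X) (i : Y ⟶ E) [Mono i]
    (hE : ∀ g : E ⟶ X, ∃ f : E ⟶ X', f ≫ ψ = g) (φ : Y ⟶ X) :
    ∃ f : Y ⟶ X', f ≫ ψ = φ := by
  obtain ⟨g, hg⟩ := Injective.factors φ i
  obtain ⟨f, hf⟩ := hE g
  exact ⟨i ≫ f, by rw [Category.assoc, hf, hg]⟩

theorem forall_lift_iff_forall_lift_of_injective {C : Type*} [Category C] (P : C → Prop)
    (hembed : ∀ Y, P Y → ∃ (E : C) (i : Y ⟶ E), Mono i ∧ P E ∧ Injective E)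
    {X X' : C} [Injective X] (ψ : X' ⟶ X) :
    (∀ Y, P Y → ∀ φ : Y ⟶ X, ∃ f : Y ⟶ X', f ≫ ψ = φ) ↔
      (∀ Y, P Y → Injective Y → ∀ φ : Y ⟶ X, ∃ f : Y ⟶ X', f ≫ ψ = φ) := by
  refine ⟨fun h Y hY _ => h Y hY, fun h Y hY φ => ?_⟩
  obtain ⟨E, i, hi, hE, hEinj⟩ := hembed Y hY
  exact Injective.exists_lift_of_mono_of_forall_lift ψ i (h E hE hEinj) φ

theorem stmt6_general {V : Type} [Quiver.{1} V] {R : Type} [Ring R] (tt : TorsionTheory R)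
    (hembed : ∀ Y : QRep V R, (∀ v : V, tt.F (Y.obj ((Paths.of V).obj v))) →
      ∃ (E : QRep V R) (i : Y ⟶ E), Mono i ∧ (∀ v : V, tt.F (E.obj ((Paths.of V).obj v))) ∧
        Injective E)
    (X X' : QRep V R) (hX : Injective X) (ψ : X' ⟶ X) :
    (∀ Y : QRep V R, (∀ v : V, tt.F (Y.obj ((Paths.of V).obj v))) →
        ∀ φ : Y ⟶ X, ∃ f : Y ⟶ X', f ≫ ψ = φ) ↔
    (∀ Y : QRep V R, (∀ v : V, tt.F (Y.obj ((Paths.of V).obj v))) → Injective Y →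
        ∀ φ : Y ⟶ X, ∃ f : Y ⟶ X', f ≫ ψ = φ) :=
  forall_lift_iff_forall_lift_of_injective _ hembed ψ

/-- Let `X` be an injective representation of a quiver and suppose
every componentwise torsion free representation embeds into one that is
componentwise torsion free and injective. Then a morphism `ψ : X' ⟶ X` with
`X'` componentwise torsion free is an `F_cw`-precover of `X` if and only if
every morphism `φ : Y ⟶ X` with `Y` componentwise torsion free *and injective*
factors through `ψ`. -/
theorem stmt6 {V : Type} [Quiver.{1} V] {R : Type} [Ring R] (tt : TorsionTheory R)
    (hembed : ∀ Y : QRep V R, (∀ v : V, tt.F (Y.obj ((Paths.of V).obj v))) →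
      ∃ (E : QRep V R) (i : Y ⟶ E), Mono i ∧ (∀ v : V, tt.F (E.obj ((Paths.of V).obj v))) ∧
        Injective E)
    (X X' : QRep V R) (hX : Injective X) (ψ : X' ⟶ X)
    (hX' : ∀ v : V, tt.F (X'.obj ((Paths.of V).obj v))) :
    (∀ Y : QRep V R, (∀ v : V, tt.F (Y.obj ((Paths.of V).obj v))) →
        ∀ φ : Y ⟶ X, ∃ f : Y ⟶ X', f ≫ ψ = φ) ↔
    (∀ Y : QRep V R, (∀ v : V, tt.F (Y.obj ((Paths.of V).obj v))) → Injective Y →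
        ∀ φ : Y ⟶ X, ∃ f : Y ⟶ X', f ≫ ψ = φ) :=
  stmt6_general tt hembed X X' hX ψ
end

section
/- For the n-cycle quiver (a loop with n vertices v₁ → v₂ → ⋯ → vₙ → v₁) and an injective R-module E, the representation X with X(vᵢ) = Eⁿ for all i and X(aᵢ)(x₁,…,xₙ) = (xₙ, x₁, …, x_{n−1}) satisfies: each X(vᵢ) is injective and each map X(vᵢ) → ∏_{s(a)=vᵢ} X(t(a)) is a split epimorphism, yet X is not an injective representation. -/
open CategoryTheory

/-- The `n`-cycle quiver: vertices `Fin n`, one arrow `i ⟶ i + 1` for each `i`. -/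
instance cycleQuiver (n : ℕ) [NeZero n] : Quiver.{0} (Fin n) :=
  ⟨fun i j => PLift (j = i + 1)⟩

/-- The cyclic shift `(x₁, …, xₙ) ↦ (xₙ, x₁, …, x_{n-1})` on `Eⁿ`. -/
def shiftMap (R : Type) [Ring R] (n : ℕ) [NeZero n] (E : Type) [AddCommGroup E]
    [Module R E] : (Fin n → E) →ₗ[R] (Fin n → E) where
  toFun x := fun j => x (j - 1)
  map_add' _ _ := rfl
  map_smul' _ _ := rfl

/-- The representation of the `n`-cycle quiver with `Eⁿ` at every vertex and the
cyclic shift along every arrow. -/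
def cycleRep (R : Type) [Ring R] (n : ℕ) [NeZero n] (E : Type) [AddCommGroup E]
    [Module R E] : Paths (Fin n) ⥤ ModuleCat.{0,0} R :=
  Paths.lift
    { obj := fun _ => ModuleCat.of R (Fin n → E)
      map := fun _ => ModuleCat.ofHom (shiftMap R n E) }

/-- The map `X(v) → ∏_{s(a) = v} X(t(a))` induced by the arrow maps. -/
def outMap {V : Type} [Quiver.{0} V] {R : Type} [Ring R]
    (X : Paths V ⥤ ModuleCat.{0,0} R) (v : V) :
    X.obj ((Paths.of V).obj v) →ₗ[R] ((a : Σ w : V, v ⟶ w) → X.obj ((Paths.of V).obj a.1)) :=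
  LinearMap.pi fun a => (X.map a.2.toPath).hom

/-! The representation `X` is not injective because it has a non-split self-extension `Y`:
take `Y(v) = Eⁿ × E` with every arrow acting by `(x, e) ↦ (shift x + δ₁ e, e)`.
If `r : Y ⟶ X` retracted the inclusion, then `ρᵢ := rᵢ (0, e)` would satisfy
`δ₁ e + ρ_{i+1} = shift ρᵢ`; reading off coordinate `i + 1` gives
`δ₁ e (i + 1) + ρ_{i+1} (i + 1) = ρᵢ i`, and summing over the cycle telescopes to `e = 0`. -/

section CycleRep

variable (R : Type) [Ring R] (n : ℕ) [NeZero n] (E : Type) [AddCommGroup E] [Module R E]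

instance subsingleton_arrows_from (i : Fin n) : Subsingleton (Σ w : Fin n, i ⟶ w) :=
  ⟨by rintro ⟨_, ⟨rfl⟩⟩ ⟨_, ⟨rfl⟩⟩; rfl⟩

def shiftMapEquiv : (Fin n → E) ≃ₗ[R] (Fin n → E) :=
  LinearEquiv.funCongrLeft R E (Equiv.subRight 1)

theorem outMap_cycleRep_comp_eq_id (i : Fin n) :
    outMap (cycleRep R n E) i ∘ₗ
      ((shiftMapEquiv R n E).symm.toLinearMap ∘ₗ LinearMap.proj ⟨i + 1, ⟨rfl⟩⟩) = LinearMap.id := by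
  refine LinearMap.ext fun f => funext fun a => ?_
  obtain rfl := Subsingleton.elim a ⟨i + 1, ⟨rfl⟩⟩
  exact (shiftMapEquiv R n E).apply_symm_apply _

def extShiftMap : ((Fin n → E) × E) →ₗ[R] ((Fin n → E) × E) :=
  LinearMap.prod (shiftMap R n E ∘ₗ LinearMap.fst R _ _ + LinearMap.single R (fun _ => E) 1 ∘ₗ
    LinearMap.snd R _ _) (LinearMap.snd R _ _)

def cycleExt : Paths (Fin n) ⥤ ModuleCat.{0,0} R :=
  Paths.lift
    { obj := fun _ => ModuleCat.of R ((Fin n → E) × E)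
      map := fun _ => ModuleCat.ofHom (extShiftMap R n E) }

def cycleRepToExt : cycleRep R n E ⟶ cycleExt R n E :=
  Paths.liftNatTrans (fun _ => ModuleCat.ofHom (LinearMap.inl R _ _)) fun _ => by
    refine ModuleCat.hom_ext (LinearMap.ext fun x => ?_)
    change ((shiftMap R n E x, 0) : (Fin n → E) × E) = extShiftMap R n E (x, 0)
    simp [extShiftMap]

instance (v : Paths (Fin n)) : Mono ((cycleRepToExt R n E).app v) :=
  (ModuleCat.mono_iff_injective _).2 (LinearMap.inl_injective (R := R) (M := Fin n → E) (M₂ := E))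

instance : Mono (cycleRepToExt R n E) :=
  NatTrans.mono_of_mono_app _

theorem eq_zero_of_retraction (r : cycleExt R n E ⟶ cycleRep R n E)
    (hr : cycleRepToExt R n E ≫ r = 𝟙 _) (e : E) : e = 0 := by
  let r' (i : Fin n) : ((Fin n → E) × E) →ₗ[R] (Fin n → E) := (r.app i).hom
  have retract (i : Fin n) (x : Fin n → E) : r' i (x, 0) = x :=
    LinearMap.congr_fun (congrArg ModuleCat.Hom.hom (NatTrans.congr_app hr i)) x
  have natural (i : Fin n) (y : (Fin n → E) × E) :
      r' (i + 1) (extShiftMap R n E y) = shiftMap R n E (r' i y) :=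
    LinearMap.congr_fun (congrArg ModuleCat.Hom.hom
      (r.naturality (Quiver.Hom.toPath (⟨rfl⟩ : i ⟶ i + 1)))) y
  set ρ : Fin n → Fin n → E := fun i => r' i (0, e)
  have step (i : Fin n) : Pi.single 1 e + ρ (i + 1) = shiftMap R n E (ρ i) := by
    rw [← natural, ← retract (i + 1) (Pi.single 1 e), ← map_add]
    congr 1
    simp [extShiftMap]
  have diag (i : Fin n) : (Pi.single 1 e : Fin n → E) (i + 1) + ρ (i + 1) (i + 1) = ρ i i := by
    simpa [shiftMap] using congrFun (step i) (i + 1)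
  have sum_shift (f : Fin n → E) : ∑ i, f (i + 1) = ∑ i, f i := Equiv.sum_comp (Equiv.addRight 1) f
  calc e = ∑ i, (Pi.single 1 e : Fin n → E) i := by simp
    _ = ∑ i, ρ i i - ∑ i, ρ (i + 1) (i + 1) := by
      rw [← sum_shift, eq_sub_iff_add_eq, ← Finset.sum_add_distrib]
      exact Finset.sum_congr rfl fun i _ => diag i
    _ = 0 := by rw [sum_shift fun i => ρ i i, sub_self]

/-- For the `n`-cycle quiver and a (nonzero) injective `R`-module
`E`, the cyclic-shift representation `X` with `X(vᵢ) = Eⁿ` satisfies: each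
`X(vᵢ)` is an injective module and each induced map
`X(vᵢ) → ∏_{s(a)=vᵢ} X(t(a))` is a split epimorphism, yet `X` is not an
injective representation. -/
theorem stmt7 (R : Type) [Ring R] (n : ℕ) [NeZero n] (E : Type) [AddCommGroup E]
    [Module R E] (hE : Module.Injective R E) (hnt : Nontrivial E) :
    (∀ i : Fin n, Module.Injective R ((cycleRep R n E).obj ((Paths.of (Fin n)).obj i))) ∧
    (∀ i : Fin n, ∃ s, (outMap (cycleRep R n E) i) ∘ₗ s = LinearMap.id) ∧
    ¬ Injective (cycleRep R n E) := by
  refine ⟨fun _ => inferInstanceAs (Module.Injective R (Fin n → E)),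
    fun i => ⟨_, outMap_cycleRep_comp_eq_id R n E i⟩, fun hInj => ?_⟩
  obtain ⟨r, hr⟩ := hInj.factors (𝟙 _) (cycleRepToExt R n E)
  obtain ⟨e, he⟩ := exists_ne (0 : E)
  exact he (eq_zero_of_retraction R n E r hr e)
end CycleRep
end

section
/- Consider the star quiver Q with one source v₀ and countably many arrows v₀ → vᵢ (i ≥ 1), over R = ℤ with the usual torsion theory. For each i ≥ 1 let Eᵢ be the representation with ℚ at vertices v₀ and vᵢ and 0 elsewhere (identity on the arrow v₀ → vᵢ, zero otherwise). Then each Eᵢ is a torsion free injective representation, but the direct sum ⊕_{i≥1} Eᵢ is not an injective representation, since the induced map ℚ^{(ℕ)} → ℚ^{ℕ} is not a split epimorphism. -/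
open CategoryTheory CategoryTheory.Limits

/-- The star quiver: one source `none` and an arrow `none ⟶ some j` for every
`j : ℕ` (no other arrows). -/
instance starQuiver : Quiver.{0} (Option ℕ) :=
  ⟨fun a b => PLift (a = none ∧ b ≠ none)⟩

/-- The component of the representation `Eᵢ`: the module `ℚ` at the vertices
`none` (= `v₀`) and `some i` (= `vᵢ`), and `0` elsewhere. -/
def starSub (i : ℕ) (v : Option ℕ) : Submodule ℤ ℚ :=
  if v = none ∨ v = some i then ⊤ else ⊥

/-- The arrow maps of `Eᵢ`: the identity on the arrow `none ⟶ some i`, zero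
otherwise. -/
def starMapAux (i : ℕ) (a b : Option ℕ) : (starSub i a) →ₗ[ℤ] (starSub i b) :=
  if h : b = some i then
    { toFun := fun x => ⟨x.1, by simp [starSub, h]⟩
      map_add' := fun x y => rfl
      map_smul' := fun c x => rfl }
  else 0

/-- The representation `Eᵢ` of the star quiver. -/
def starRep (i : ℕ) : Paths (Option ℕ) ⥤ ModuleCat.{0,0} ℤ :=
  Paths.lift
    { obj := fun v => ModuleCat.of ℤ (starSub i v)
      map := fun {a b} _ => ModuleCat.ofHom (starMapAux i a b) }

/-!
Morphisms `Y ⟶ Eᵢ` correspond naturally to linear maps `Y(vᵢ) → ℚ`: such a map determines the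
component at `vᵢ`, the component at `v₀` is forced to be its composite with `Y(v₀ ⟶ vᵢ)`, and all
other components land in `0`. Since evaluation at `vᵢ` preserves monomorphisms, `Eᵢ` inherits
injectivity from the divisible group `ℚ`.

For the sum, test injectivity against the inclusion of the representation `L` that is `0` at `v₀`
and `ℚ` at every leaf into the constant representation `ℚ`. The map `L ⟶ ⊕ Eᵢ` sending the leaf
`vᵢ` into `Eᵢ` would extend, giving an element `y` of `(⊕ Eᵢ)(v₀)` whose image under every arrow
`v₀ ⟶ vᵢ` is `1 ∈ Eᵢ(vᵢ)`. But `y` is a finite sum of elements of the summands, so all but finitely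
many arrows kill it.
-/

namespace CategoryTheory

instance evaluation_preservesMonomorphisms {K C : Type*} [Category K] [Category C]
    [Limits.HasPullbacks C] (k : K) : ((evaluation K C).obj k).PreservesMonomorphisms :=
  ⟨fun f _ => inferInstanceAs (Mono (f.app k))⟩

theorem Injective.of_homEquiv {C D : Type*} [Category C] [Category D] (F : C ⥤ D)
    [F.PreservesMonomorphisms] {E : C} {J : D} [Injective J]
    (e : ∀ Y, (Y ⟶ E) ≃ (F.obj Y ⟶ J))
    (he : ∀ {X Y : C} (f : X ⟶ Y) (φ : Y ⟶ E), e X (f ≫ φ) = F.map f ≫ e Y φ) :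
    Injective E where
  factors g f _ := ⟨(e _).symm (Injective.factorThru (e _ g) (F.map f)),
    (e _).injective (by simp [he])⟩

end CategoryTheory

theorem ModuleCat.iSup_range_ι_eq_top {R : Type*} [Ring R] {J : Type*} [Category J]
    {K : J ⥤ ModuleCat R} {c : Cocone K} (hc : IsColimit c) :
    (⨆ j, LinearMap.range (c.ι.app j).hom : Submodule R c.pt) = ⊤ := by
  set N : Submodule R c.pt := ⨆ j, LinearMap.range (c.ι.app j).hom
  have hq : ModuleCat.ofHom N.mkQ = 0 := hc.hom_ext fun j => by
    ext x
    simpa using Submodule.mem_iSup_of_mem j (LinearMap.mem_range_self _ x)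
  rw [← N.ker_mkQ, LinearMap.ker_eq_top]
  exact congrArg ModuleCat.Hom.hom hq

instance : Injective (ModuleCat.of ℤ ℚ) :=
  (AddCommGrpCat.injective_as_module_iff ℚ).mpr inferInstance

def starArrow (j : ℕ) : (none : Option ℕ) ⟶ some j :=
  ⟨⟨rfl, Option.some_ne_none j⟩⟩

-- Unlike `(starArrow j).toPath`, whose endpoints are typed in `Option ℕ` rather than
-- `Paths (Option ℕ)`, this form keeps `simp` and `rw` working on functors out of the path category.
def starPath (j : ℕ) : (Paths.of (Option ℕ)).obj none ⟶ (Paths.of (Option ℕ)).obj (some j) :=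
  (Paths.of (Option ℕ)).map (starArrow j)

section StarNatTrans

variable {C : Type*} [Category C] {F G : Paths (Option ℕ) ⥤ C}

def starNatTrans
    (app : ∀ v, F.obj ((Paths.of (Option ℕ)).obj v) ⟶ G.obj ((Paths.of (Option ℕ)).obj v))
    (naturality : ∀ j, F.map (starPath j) ≫ app (some j) = app none ≫ G.map (starPath j)) :
    F ⟶ G :=
  Paths.liftNatTrans app fun e => by
    obtain ⟨⟨rfl, hb⟩⟩ := e
    obtain ⟨j, rfl⟩ := Option.ne_none_iff_exists'.1 hb
    exact naturality j

@[simp]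
lemma starNatTrans_app (app) (naturality) (v : Option ℕ) :
    (starNatTrans (F := F) (G := G) app naturality).app ((Paths.of (Option ℕ)).obj v) = app v :=
  rfl

lemma starNatTrans_ext {α β : F ⟶ G}
    (h : ∀ v, α.app ((Paths.of (Option ℕ)).obj v) = β.app ((Paths.of (Option ℕ)).obj v)) :
    α = β :=
  NatTrans.ext (funext h)

end StarNatTrans

lemma starRep_obj_some_eq_of_ne {i j : ℕ} (h : j ≠ i)
    (x y : (starRep i).obj ((Paths.of (Option ℕ)).obj (some j))) : x = y := by
  have hx : ∀ x : starSub i (some j), x = 0 := by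
    rw [starSub, if_neg (by simpa using h)]
    exact fun x => Subsingleton.elim _ _
  exact (hx x).trans (hx y).symm

lemma starRep_map_starPath (i j : ℕ) :
    (starRep i).map (starPath j) = ModuleCat.ofHom (starMapAux i none (some j)) :=
  Paths.lift_toPath _ _

lemma coe_starRep_map_starPath_self (i : ℕ)
    (x : (starRep i).obj ((Paths.of (Option ℕ)).obj none)) :
    ((starRep i).map (starPath i) x).val = x.val := by
  rw [starRep_map_starPath, starMapAux, dif_pos rfl]
  rfl

lemma starRep_map_starPath_of_ne {i j : ℕ} (h : j ≠ i) : (starRep i).map (starPath j) = 0 := by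
  rw [starRep_map_starPath, starMapAux, dif_neg (Option.some_injective _ |>.ne h)]
  rfl

def starRepObjIso (i : ℕ) (v : Option ℕ) (hv : v = none ∨ v = some i) :
    (starRep i).obj ((Paths.of (Option ℕ)).obj v) ≅ ModuleCat.of ℤ ℚ where
  hom := ModuleCat.ofHom (starSub i v).subtype
  inv := ModuleCat.ofHom <| LinearMap.id.codRestrict (starSub i v) fun _ => by
    rw [starSub, if_pos hv]
    trivial

@[simp]
lemma starRepObjIso_inv_comp_starRep_map (i : ℕ) :
    (starRepObjIso i none (Or.inl rfl)).inv ≫ (starRep i).map (starPath i) =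
      (starRepObjIso i (some i) (Or.inr rfl)).inv := by
  ext q
  exact Subtype.ext (coe_starRep_map_starPath_self i _)

section Extension

variable (i : ℕ) {Y : Paths (Option ℕ) ⥤ ModuleCat.{0} ℤ}
  (ψ : Y.obj ((Paths.of (Option ℕ)).obj (some i)) ⟶ ModuleCat.of ℤ ℚ)

def starRepExtendApp (v : Option ℕ) :
    Y.obj ((Paths.of (Option ℕ)).obj v) ⟶ (starRep i).obj ((Paths.of (Option ℕ)).obj v) :=
  match v with
  | none => Y.map (starPath i) ≫ ψ ≫ (starRepObjIso i none (Or.inl rfl)).inv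
  | some j =>
    if h : j = i then
      Y.map (eqToHom (by rw [h])) ≫ ψ ≫ (starRepObjIso i (some j) (Or.inr (by rw [h]))).inv
    else 0

def starRepExtend : Y ⟶ starRep i :=
  starNatTrans (starRepExtendApp i ψ) fun j => by
    by_cases h : j = i
    · subst h
      simp [starRepExtendApp]
    · ext y
      exact starRep_obj_some_eq_of_ne h _ _

lemma starRepExtend_app_self :
    (starRepExtend i ψ).app ((Paths.of (Option ℕ)).obj (some i)) =
      ψ ≫ (starRepObjIso i (some i) (Or.inr rfl)).inv := by
  simp [starRepExtend, starRepExtendApp]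

end Extension

def starRepHomEquiv (i : ℕ) (Y : Paths (Option ℕ) ⥤ ModuleCat.{0} ℤ) :
    (Y ⟶ starRep i) ≃ (Y.obj ((Paths.of (Option ℕ)).obj (some i)) ⟶ ModuleCat.of ℤ ℚ) where
  toFun φ := φ.app _ ≫ (starRepObjIso i (some i) (Or.inr rfl)).hom
  invFun := starRepExtend i
  left_inv φ := starNatTrans_ext fun
    | none => by
      ext y
      apply Subtype.ext
      change (φ.app _ (Y.map (starPath i) y)).val = _
      rw [NatTrans.naturality_apply]
      exact coe_starRep_map_starPath_self i _
    | some j => by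
      by_cases h : j = i
      · subst h
        simp [starRepExtend_app_self]
      · ext y
        exact starRep_obj_some_eq_of_ne h _ _
  right_inv ψ := by
    simp [starRepExtend_app_self]

instance (i : ℕ) : Injective (starRep i) :=
  Injective.of_homEquiv ((evaluation _ _).obj ((Paths.of (Option ℕ)).obj (some i)))
    (starRepHomEquiv i) fun f φ => by simp [starRepHomEquiv]

section Sigma

def leafRep : Paths (Option ℕ) ⥤ ModuleCat.{0} ℤ :=
  Paths.lift
    { obj := fun v => v.elim (ModuleCat.of ℤ PUnit) fun _ => ModuleCat.of ℤ ℚ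
      map := fun _ => 0 }

def constRep : Paths (Option ℕ) ⥤ ModuleCat.{0} ℤ :=
  (Functor.const _).obj (ModuleCat.of ℤ ℚ)

lemma leafRep_map_starPath (j : ℕ) : leafRep.map (starPath j) = 0 :=
  Paths.lift_toPath _ _

def leafRepIncl : leafRep ⟶ constRep :=
  starNatTrans (fun | none => 0 | some _ => 𝟙 (ModuleCat.of ℤ ℚ)) fun j => by
    rw [leafRep_map_starPath, zero_comp, zero_comp]

instance : Mono leafRepIncl := by
  refine (NatTrans.mono_iff_mono_app _).2 fun v => ?_
  rcases v with _ | j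
  · exact (ModuleCat.mono_iff_injective _).2 fun _ _ _ => rfl
  · exact inferInstanceAs (Mono (𝟙 _))

variable (S : Set ℕ)

open Classical in
noncomputable def leafRepToSigma : leafRep ⟶ ∐ fun j : S => starRep j :=
  starNatTrans
    (fun
      | none => 0
      | some j =>
        if hj : j ∈ S then
          (starRepObjIso j (some j) (Or.inr rfl)).inv ≫
            (Sigma.ι (fun j : S => starRep j) ⟨j, hj⟩).app _
        else 0)
    fun j => by simp [leafRep_map_starPath]

lemma leafRepToSigma_app_some (k : S) :
    (leafRepToSigma S).app ((Paths.of (Option ℕ)).obj (some k)) =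
      (starRepObjIso k (some k) (Or.inr rfl)).inv ≫ (Sigma.ι (fun j : S => starRep j) k).app _ := by
  rw [leafRepToSigma, starNatTrans_app]
  exact dif_pos k.2

lemma sigma_starRep_ι_comp_map_starPath {j : S} {k : ℕ} (h : (j : ℕ) ≠ k) :
    (Sigma.ι (fun j : S => starRep j) j).app _ ≫ (∐ fun j : S => starRep j).map (starPath k) =
      0 := by
  rw [← NatTrans.naturality, starRep_map_starPath_of_ne h.symm, zero_comp]

lemma exists_sigma_starRep_map_starPath_eq_zero [Infinite S]
    (y : (∐ fun j : S => starRep j).obj ((Paths.of (Option ℕ)).obj none)) :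
    ∃ k : S, (∐ fun j : S => starRep j).map (starPath k) y = 0 := by
  have hc := isColimitOfPreserves ((evaluation _ _).obj ((Paths.of (Option ℕ)).obj none))
    (colimit.isColimit (Discrete.functor fun j : S => starRep j))
  obtain ⟨s, hs⟩ := Submodule.mem_iSup_iff_exists_finset.1
    ((ModuleCat.iSup_range_ι_eq_top hc).symm ▸ Submodule.mem_top : y ∈ _)
  obtain ⟨k, hk⟩ := Infinite.exists_notMem_finset (s.image Discrete.as)
  refine ⟨k, (iSup₂_le fun j hj => ?_ : _ ≤ LinearMap.ker _) hs⟩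
  rw [LinearMap.range_le_ker_iff, ← ModuleCat.hom_comp]
  refine congrArg ModuleCat.Hom.hom (sigma_starRep_ι_comp_map_starPath S ?_)
  exact fun hjk => hk (Finset.mem_image.2 ⟨j, hj, Subtype.ext hjk⟩)

theorem not_injective_sigma_starRep [Infinite S] : ¬ Injective (∐ fun j : S => starRep j) := by
  intro
  obtain ⟨h, hh⟩ := Injective.factors (leafRepToSigma S) leafRepIncl
  obtain ⟨k, hk⟩ := exists_sigma_starRep_map_starPath_eq_zero S (h.app _ (1 : ℚ))
  have hι : Function.Injective
      ((Sigma.ι (fun j : S => starRep j) k).app ((Paths.of (Option ℕ)).obj (some k))) :=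
    (ModuleCat.mono_iff_injective _).1 inferInstance
  -- The arrows of `constRep` are identities, so naturality of `h` moves it from `vₖ` to `v₀`.
  have hleaf : (starRepObjIso k (some k) (Or.inr rfl)).inv ≫
      (Sigma.ι (fun j : S => starRep j) k).app _ =
        h.app _ ≫ (∐ fun j : S => starRep j).map (starPath k) := by
    rw [← leafRepToSigma_app_some, ← hh, ← h.naturality]
    rfl
  have hzero : (starRepObjIso k (some k) (Or.inr rfl)).inv 1 = 0 :=
    hι <| ((ConcreteCategory.congr_hom hleaf (1 : ℚ)).trans hk).trans (map_zero _).symm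
  exact one_ne_zero (congrArg Subtype.val hzero)

end Sigma

/-- For the star quiver with source `v₀` and countably many arrows
`v₀ ⟶ vᵢ`, over `R = ℤ` with the usual torsion theory, each representation `Eᵢ`
(with `ℚ` at `v₀` and `vᵢ` and `0` elsewhere) is injective and componentwise
torsion free, but the direct sum `⊕_{i ≥ 1} Eᵢ` is not an injective
representation. -/
theorem stmt10 :
    (∀ i : ℕ, 1 ≤ i → Injective (starRep i)) ∧
    (∀ i : ℕ, 1 ≤ i → ∀ (v : Option ℕ) (n : ℤ)
        (x : (starRep i).obj ((Paths.of (Option ℕ)).obj v)), n ≠ 0 → n • x = 0 → x = 0) ∧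
    ¬ Injective (∐ fun i : {i : ℕ // 1 ≤ i} => starRep i.1) := by
  refine ⟨fun i _ => inferInstance, fun i _ v n x hn h => ?_, ?_⟩
  · exact ((smul_eq_zero (M := starSub i v)).mp h).resolve_left hn
  · have : Infinite (Set.Ici 1) := (Set.Ici_infinite 1).to_subtype
    exact not_injective_sigma_starRep (Set.Ici 1)
end

section
/- Let R be a ring, Q the quiver with two vertices and one arrow (• → •), and M a left R-module admitting a torsion free cover ψ: T → M with respect to a hereditary faithful torsion theory on R-Mod. Then the morphism of representations from (Ker ψ → T) (with the inclusion as the arrow map) to (0 → M) given by (0, ψ) is an F_cw-cover of the representation 0 → M. -/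
open CategoryTheory CategoryTheory.Limits

/-! A lift of `β` through the precover `ψ` sends the image of `g` into `Ker ψ`, which gives the
factorization. Minimality comes from that of `ψ`: a compatible `β` is bijective and satisfies
`β⁻¹(Ker ψ) = Ker ψ`, so its restriction `α` to `Ker ψ` is bijective as well. -/

section

variable {R : Type*} [Ring R] {A B T M : Type*}
  [AddCommGroup A] [Module R A] [AddCommGroup B] [Module R B]
  [AddCommGroup T] [Module R T] [AddCommGroup M] [Module R M]

theorem LinearMap.apply_mem_ker_of_comp_eq_zero {ψ : T →ₗ[R] M} {β' : B →ₗ[R] T}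
    {β : B →ₗ[R] M} {g : A →ₗ[R] B} (hβ' : ψ ∘ₗ β' = β) (hβg : β ∘ₗ g = 0) (a : A) :
    β' (g a) ∈ LinearMap.ker ψ := by
  rw [LinearMap.mem_ker, ← LinearMap.comp_apply, hβ', ← LinearMap.comp_apply, hβg,
    LinearMap.zero_apply]

theorem Submodule.bijective_of_subtype_comp_eq {N : Submodule R T} {α : N →ₗ[R] N}
    {β : T →ₗ[R] T} (hβ : Function.Bijective β) (hN : N.comap β = N)
    (hc : N.subtype ∘ₗ α = β ∘ₗ N.subtype) : Function.Bijective α := by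
  have hαβ : ∀ k : N, (α k : T) = β k := fun k => LinearMap.congr_fun hc k
  refine ⟨fun k k' h => Subtype.ext (hβ.injective ?_), fun k => ?_⟩
  · rw [← hαβ, ← hαβ, h]
  · obtain ⟨x, hx⟩ := hβ.surjective k
    have hxN : x ∈ N := by
      rw [← hN, Submodule.mem_comap, hx]
      exact k.2
    exact ⟨⟨x, hxN⟩, Subtype.ext (by rw [hαβ, hx])⟩

end

theorem stmt13_general {R : Type} [Ring R] (tt : TorsionTheory R)
    (M T : Type) [AddCommGroup M] [Module R M] [AddCommGroup T] [Module R T]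
    (ψ : T →ₗ[R] M)
    (hprecov : ∀ (G : Type) [AddCommGroup G] [Module R G], tt.F (ModuleCat.of R G) →
        ∀ g : G →ₗ[R] M, ∃ h : G →ₗ[R] T, ψ ∘ₗ h = g)
    (hcov : ∀ f : T →ₗ[R] T, ψ ∘ₗ f = ψ → Function.Bijective f) :
    (∀ (A B : Type) [AddCommGroup A] [Module R A] [AddCommGroup B] [Module R B],
        ∀ (g : A →ₗ[R] B), tt.F (ModuleCat.of R A) → tt.F (ModuleCat.of R B) →
        ∀ (β : B →ₗ[R] M), β ∘ₗ g = 0 →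
        ∃ (α' : A →ₗ[R] (LinearMap.ker ψ)) (β' : B →ₗ[R] T),
          (LinearMap.ker ψ).subtype ∘ₗ α' = β' ∘ₗ g ∧ ψ ∘ₗ β' = β) ∧
    (∀ (α : LinearMap.ker ψ →ₗ[R] LinearMap.ker ψ) (β : T →ₗ[R] T),
        (LinearMap.ker ψ).subtype ∘ₗ α = β ∘ₗ (LinearMap.ker ψ).subtype →
        ψ ∘ₗ β = ψ → Function.Bijective α ∧ Function.Bijective β) := by
  refine ⟨fun A B _ _ _ _ g _ hB β hβg => ?_, fun α β hc hψβ => ?_⟩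
  · obtain ⟨β', hβ'⟩ := hprecov B hB β
    exact ⟨(β' ∘ₗ g).codRestrict _ (LinearMap.apply_mem_ker_of_comp_eq_zero hβ' hβg), β', rfl,
      hβ'⟩
  · have hβ := hcov β hψβ
    have hker : (LinearMap.ker ψ).comap β = LinearMap.ker ψ := by
      rw [← LinearMap.ker_comp, hψβ]
    exact ⟨Submodule.bijective_of_subtype_comp_eq hβ hker hc, hβ⟩

/-- Let `ψ : T → M` be a torsion free cover of a module `M` (for a
hereditary faithful torsion theory).  For the quiver `• → •`, the morphism of
representations `(0, ψ) : (Ker ψ → T) ⟶ (0 → M)` (with the inclusion as the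
arrow map of the domain) is an `F_cw`-cover of the representation `0 → M`:
every morphism from a componentwise torsion free representation `(A → B)` to
`(0 → M)` factors through it, and every endomorphism of `(Ker ψ → T)`
compatible with it is an automorphism. -/
theorem stmt13 {R : Type} [Ring R] (tt : TorsionTheory R)
    (M T : Type) [AddCommGroup M] [Module R M] [AddCommGroup T] [Module R T]
    (ψ : T →ₗ[R] M) (hTF : tt.F (ModuleCat.of R T))
    (hprecov : ∀ (G : Type) [AddCommGroup G] [Module R G], tt.F (ModuleCat.of R G) →
        ∀ g : G →ₗ[R] M, ∃ h : G →ₗ[R] T, ψ ∘ₗ h = g)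
    (hcov : ∀ f : T →ₗ[R] T, ψ ∘ₗ f = ψ → Function.Bijective f) :
    (∀ (A B : Type) [AddCommGroup A] [Module R A] [AddCommGroup B] [Module R B],
        ∀ (g : A →ₗ[R] B), tt.F (ModuleCat.of R A) → tt.F (ModuleCat.of R B) →
        ∀ (β : B →ₗ[R] M), β ∘ₗ g = 0 →
        ∃ (α' : A →ₗ[R] (LinearMap.ker ψ)) (β' : B →ₗ[R] T),
          (LinearMap.ker ψ).subtype ∘ₗ α' = β' ∘ₗ g ∧ ψ ∘ₗ β' = β) ∧
    (∀ (α : LinearMap.ker ψ →ₗ[R] LinearMap.ker ψ) (β : T →ₗ[R] T),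
        (LinearMap.ker ψ).subtype ∘ₗ α = β ∘ₗ (LinearMap.ker ψ).subtype →
        ψ ∘ₗ β = ψ → Function.Bijective α ∧ Function.Bijective β) :=
  stmt13_general tt M T ψ hprecov hcov
end

section
/- Let R be a ring, M a left R-module with flat cover φ: F → M. For the quiver • → •, the representation morphism from (0 → F) to (0 → M) given by (0, φ) is a categorical flat cover of the representation 0 → M, where a representation A → B is categorical flat iff A and B are flat and A → B is a pure monomorphism. -/
/-!
A morphism `(A →g B) ⟶ (0 → M)` is a map `β : B → M` killing the image of `g`, i.e. a map
`B ⧸ range g → M`. Since `g` is pure and `B` is flat, `B ⧸ range g` is flat, so this map lifts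
through `φ`; composing the lift with `B → B ⧸ range g` gives the factorization.
-/

/-- A linear map `g : A → B` is a pure monomorphism if `L ⊗ A → L ⊗ B` is
injective for every module `L`. -/
def IsPureMono {R A B : Type} [CommRing R] [AddCommGroup A] [Module R A]
    [AddCommGroup B] [Module R B] (g : A →ₗ[R] B) : Prop :=
  ∀ (L : Type) [AddCommGroup L] [Module R L],
    Function.Injective (LinearMap.lTensor L g)

open LinearMap TensorProduct

lemma LinearMap.rTensor_lTensor_comm {R M N P Q : Type*} [CommRing R]
    [AddCommGroup M] [Module R M] [AddCommGroup N] [Module R N]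
    [AddCommGroup P] [Module R P] [AddCommGroup Q] [Module R Q]
    (f : M →ₗ[R] P) (g : N →ₗ[R] Q) (x : M ⊗[R] N) :
    rTensor Q f (lTensor M g x) = lTensor P g (rTensor N f x) := by
  rw [← comp_apply, ← comp_apply, rTensor_comp_lTensor, lTensor_comp_rTensor]

/-- Ideal-wise diagram chase in the `3 × 3` diagram with rows `I ⊗ -`, `R ⊗ -`, `R ⧸ I ⊗ -`
applied to `A → B → C`: purity gives injectivity on the bottom row, flatness of `B` on the
middle column. -/
lemma Module.Flat.of_exact_of_isPureMono {R A B C : Type} [CommRing R]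
    [AddCommGroup A] [Module R A] [AddCommGroup B] [Module R B] [AddCommGroup C] [Module R C]
    [Module.Flat R B] {g : A →ₗ[R] B} {π : B →ₗ[R] C} (hg : IsPureMono g)
    (hexact : Function.Exact g π) (hπ : Function.Surjective π) : Module.Flat R C := by
  refine Module.Flat.iff_rTensor_injective'.mpr fun I => (injective_iff_map_eq_zero _).mpr ?_
  intro x hx
  obtain ⟨y, rfl⟩ := lTensor_surjective I hπ x
  have hyA : lTensor R π (rTensor B I.subtype y) = 0 := by
    rw [← rTensor_lTensor_comm, hx]
  obtain ⟨v, hv⟩ := (_root_.lTensor_exact R hexact hπ _).mp hyA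
  have hv0 : rTensor A I.mkQ v = 0 := by
    refine (injective_iff_map_eq_zero _).mp (hg (R ⧸ I)) _ ?_
    rw [← rTensor_lTensor_comm, hv, ← comp_apply, ← rTensor_comp,
      (exact_subtype_mkQ I).linearMap_comp_eq_zero, rTensor_zero, LinearMap.zero_apply]
  obtain ⟨z, hz⟩ := (_root_.rTensor_exact A (exact_subtype_mkQ I) I.mkQ_surjective _).mp hv0
  have hzy : lTensor I g z = y := by
    apply Module.Flat.rTensor_preserves_injective_linearMap I.subtype Subtype.val_injective
    rw [rTensor_lTensor_comm, hz, hv]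
  rw [← hzy, ← comp_apply, ← lTensor_comp, hexact.linearMap_comp_eq_zero, lTensor_zero,
    LinearMap.zero_apply]

theorem stmt17_general {R : Type} [CommRing R] (M F : Type)
    [AddCommGroup M] [Module R M] [AddCommGroup F] [Module R F]
    (φ : F →ₗ[R] M)
    (hprecov : ∀ (G : Type) [AddCommGroup G] [Module R G], Module.Flat R G →
        ∀ g : G →ₗ[R] M, ∃ h : G →ₗ[R] F, φ ∘ₗ h = g)
    (hcov : ∀ f : F →ₗ[R] F, φ ∘ₗ f = φ → Function.Bijective f) :
    (∀ (A B : Type) [AddCommGroup A] [Module R A] [AddCommGroup B] [Module R B],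
        ∀ (g : A →ₗ[R] B), Module.Flat R A → Module.Flat R B → IsPureMono g →
        ∀ (β : B →ₗ[R] M), β ∘ₗ g = 0 →
        ∃ β' : B →ₗ[R] F, β' ∘ₗ g = 0 ∧ φ ∘ₗ β' = β) ∧
    (∀ β : F →ₗ[R] F, φ ∘ₗ β = φ → Function.Bijective β) := by
  refine ⟨fun A B _ _ _ _ g _ hB hg β hβ => ?_, hcov⟩
  have hexact : Function.Exact g (range g).mkQ := g.exact_map_mkQ_range
  have hflat : Module.Flat R (B ⧸ range g) :=
    Module.Flat.of_exact_of_isPureMono hg hexact (range g).mkQ_surjective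
  obtain ⟨h, hh⟩ := hprecov _ hflat ((range g).liftQ β (range_le_ker_iff.mpr hβ))
  refine ⟨h ∘ₗ (range g).mkQ, ?_, ?_⟩
  · rw [comp_assoc, hexact.linearMap_comp_eq_zero, comp_zero]
  · rw [← comp_assoc, hh, Submodule.liftQ_mkQ]

/-- Let `φ : F → M` be a flat cover of the module `M`.  For the
quiver `• → •`, the representation morphism `(0, φ) : (0 → F) ⟶ (0 → M)` is a
categorical flat cover of `0 → M`, where a representation `A → B` is
categorical flat iff `A`, `B` are flat and `A → B` is a pure monomorphism:
every morphism from a categorical flat representation `(A →g B)` to `(0 → M)`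
factors through `(0, φ)`, and every compatible endomorphism of `(0 → F)` is an
automorphism. -/
theorem stmt17 {R : Type} [CommRing R] (M F : Type)
    [AddCommGroup M] [Module R M] [AddCommGroup F] [Module R F]
    (φ : F →ₗ[R] M) (hF : Module.Flat R F)
    (hprecov : ∀ (G : Type) [AddCommGroup G] [Module R G], Module.Flat R G →
        ∀ g : G →ₗ[R] M, ∃ h : G →ₗ[R] F, φ ∘ₗ h = g)
    (hcov : ∀ f : F →ₗ[R] F, φ ∘ₗ f = φ → Function.Bijective f) :
    (∀ (A B : Type) [AddCommGroup A] [Module R A] [AddCommGroup B] [Module R B],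
        ∀ (g : A →ₗ[R] B), Module.Flat R A → Module.Flat R B → IsPureMono g →
        ∀ (β : B →ₗ[R] M), β ∘ₗ g = 0 →
        ∃ β' : B →ₗ[R] F, β' ∘ₗ g = 0 ∧ φ ∘ₗ β' = β) ∧
    (∀ β : F →ₗ[R] F, φ ∘ₗ β = φ → Function.Bijective β) :=
  stmt17_general M F φ hprecov hcov
end

section
/- Let R be a ring, M a left R-module with flat cover φ: F → M, and let f: G → Ker φ be a flat cover of Ker φ. For the quiver • → •, the morphism from the representation (G → F), with arrow map the composite t = i∘f (i: Ker φ → F the inclusion), to (0 → M), given by (0, φ), is a componentwise flat cover (F_cw-cover) of the representation 0 → M. -/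
/-!
A compatible pair `(α, β)` over `(0, φ)` has `β` an automorphism by the cover property of `φ`;
since `φ ∘ β = φ`, it restricts to an automorphism `E` of `Ker φ`, and `f ∘ α = E ∘ f`.
Lifting `E⁻¹ ∘ f` through `f` gives `h` with `h ∘ α` and `α ∘ h` both endomorphisms over `f`,
hence bijective, so `α` is bijective. Factorization is the usual two-step lift: lift `β` through
`φ`, then `β' ∘ g` lands in `Ker φ` and lifts through `f`.
-/

open LinearMap

section

variable {R : Type*} [Ring R] {M F G A B : Type*}
  [AddCommGroup M] [Module R M] [AddCommGroup F] [Module R F] [AddCommGroup G] [Module R G]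
  [AddCommGroup A] [Module R A] [AddCommGroup B] [Module R B]

theorem exists_comp_eq_of_comp_eq_zero {φ : F →ₗ[R] M} (f : G →ₗ[R] ker φ)
    (hlift : ∀ k : A →ₗ[R] ker φ, ∃ α : A →ₗ[R] G, f ∘ₗ α = k)
    {g : A →ₗ[R] B} {β : B →ₗ[R] M} (hβg : β ∘ₗ g = 0) {β' : B →ₗ[R] F} (hβ' : φ ∘ₗ β' = β) :
    ∃ α : A →ₗ[R] G, ((ker φ).subtype ∘ₗ f) ∘ₗ α = β' ∘ₗ g := by
  have hker : ∀ x, β' (g x) ∈ ker φ := fun x => by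
    simpa [← hβ'] using LinearMap.congr_fun hβg x
  obtain ⟨α, hα⟩ := hlift ((β' ∘ₗ g).codRestrict (ker φ) hker)
  refine ⟨α, ?_⟩
  rw [LinearMap.comp_assoc, hα]
  rfl

theorem map_ker_eq_of_comp_eq {φ : F →ₗ[R] M} (e : F ≃ₗ[R] F) (he : φ ∘ₗ e.toLinearMap = φ) :
    (ker φ).map e.toLinearMap = ker φ := by
  ext x
  have hx : φ x = φ (e.symm x) := by simpa using LinearMap.congr_fun he (e.symm x)
  rw [Submodule.map_equiv_eq_comap_symm, Submodule.mem_comap, mem_ker, mem_ker,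
    LinearEquiv.coe_coe, ← hx]

theorem bijective_of_comp_eq_comp_equiv {K : Type*} [AddCommGroup K] [Module R K]
    {f : G →ₗ[R] K} (hlift : ∀ k : G →ₗ[R] K, ∃ h : G →ₗ[R] G, f ∘ₗ h = k)
    (hcov : ∀ e : G →ₗ[R] G, f ∘ₗ e = f → Function.Bijective e)
    {α : G →ₗ[R] G} (E : K ≃ₗ[R] K) (hα : f ∘ₗ α = E.toLinearMap ∘ₗ f) :
    Function.Bijective α := by
  obtain ⟨h, hh⟩ := hlift (E.symm.toLinearMap ∘ₗ f)
  have hhα : Function.Bijective (h ∘ₗ α) := hcov _ <| by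
    rw [← LinearMap.comp_assoc, hh, LinearMap.comp_assoc, hα, ← LinearMap.comp_assoc,
      E.symm_comp, id_comp]
  have hαh : Function.Bijective (α ∘ₗ h) := hcov _ <| by
    rw [← LinearMap.comp_assoc, hα, LinearMap.comp_assoc, hh, ← LinearMap.comp_assoc,
      E.comp_symm, id_comp]
  exact ⟨.of_comp hhα.1, .of_comp hαh.2⟩

end

theorem stmt18_general {R : Type} [CommRing R] (M F G : Type)
    [AddCommGroup M] [Module R M] [AddCommGroup F] [Module R F]
    [AddCommGroup G] [Module R G]
    (φ : F →ₗ[R] M)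
    (hprecov : ∀ (A : Type) [AddCommGroup A] [Module R A], Module.Flat R A →
        ∀ g : A →ₗ[R] M, ∃ h : A →ₗ[R] F, φ ∘ₗ h = g)
    (hcov : ∀ e : F →ₗ[R] F, φ ∘ₗ e = φ → Function.Bijective e)
    (f : G →ₗ[R] LinearMap.ker φ) (hG : Module.Flat R G)
    (hprecov' : ∀ (A : Type) [AddCommGroup A] [Module R A], Module.Flat R A →
        ∀ g : A →ₗ[R] LinearMap.ker φ, ∃ h : A →ₗ[R] G, f ∘ₗ h = g)
    (hcov' : ∀ e : G →ₗ[R] G, f ∘ₗ e = f → Function.Bijective e) :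
    (∀ (A B : Type) [AddCommGroup A] [Module R A] [AddCommGroup B] [Module R B],
        ∀ (g : A →ₗ[R] B), Module.Flat R A → Module.Flat R B →
        ∀ (β : B →ₗ[R] M), β ∘ₗ g = 0 →
        ∃ (α' : A →ₗ[R] G) (β' : B →ₗ[R] F),
          ((LinearMap.ker φ).subtype ∘ₗ f) ∘ₗ α' = β' ∘ₗ g ∧ φ ∘ₗ β' = β) ∧
    (∀ (α : G →ₗ[R] G) (β : F →ₗ[R] F),
        ((LinearMap.ker φ).subtype ∘ₗ f) ∘ₗ α = β ∘ₗ ((LinearMap.ker φ).subtype ∘ₗ f) →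
        φ ∘ₗ β = φ → Function.Bijective α ∧ Function.Bijective β) := by
  refine ⟨fun A B _ _ _ _ g hA hB β hβg => ?_, fun α β hcomm hβ => ?_⟩
  · obtain ⟨β', hβ'⟩ := hprecov B hB β
    obtain ⟨α', hα'⟩ := exists_comp_eq_of_comp_eq_zero f (hprecov' A hA) hβg hβ'
    exact ⟨α', β', hα', hβ'⟩
  · let e := LinearEquiv.ofBijective β (hcov β hβ)
    let E := e.ofSubmodules (ker φ) (ker φ) (map_ker_eq_of_comp_eq e hβ)
    have hα : f ∘ₗ α = E.toLinearMap ∘ₗ f := by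
      ext x
      exact LinearMap.congr_fun hcomm x
    exact ⟨bijective_of_comp_eq_comp_equiv (hprecov' G hG) hcov' E hα, hcov β hβ⟩

/-- Let `φ : F → M` be a flat cover of the module `M` and let
`f : G → Ker φ` be a flat cover of `Ker φ`.  For the quiver `• → •`, the
morphism `(0, φ)` from the representation `(G →t F)`, where `t = i ∘ f` with
`i : Ker φ → F` the inclusion, to `(0 → M)` is a componentwise flat cover of the
representation `0 → M`: every morphism from a componentwise flat representation
`(A →g B)` to `(0 → M)` factors through it, and every compatible endomorphism of
`(G → F)` is an automorphism. -/
theorem stmt18 {R : Type} [CommRing R] (M F G : Type)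
    [AddCommGroup M] [Module R M] [AddCommGroup F] [Module R F]
    [AddCommGroup G] [Module R G]
    (φ : F →ₗ[R] M) (hF : Module.Flat R F)
    (hprecov : ∀ (A : Type) [AddCommGroup A] [Module R A], Module.Flat R A →
        ∀ g : A →ₗ[R] M, ∃ h : A →ₗ[R] F, φ ∘ₗ h = g)
    (hcov : ∀ e : F →ₗ[R] F, φ ∘ₗ e = φ → Function.Bijective e)
    (f : G →ₗ[R] LinearMap.ker φ) (hG : Module.Flat R G)
    (hprecov' : ∀ (A : Type) [AddCommGroup A] [Module R A], Module.Flat R A →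
        ∀ g : A →ₗ[R] LinearMap.ker φ, ∃ h : A →ₗ[R] G, f ∘ₗ h = g)
    (hcov' : ∀ e : G →ₗ[R] G, f ∘ₗ e = f → Function.Bijective e) :
    (∀ (A B : Type) [AddCommGroup A] [Module R A] [AddCommGroup B] [Module R B],
        ∀ (g : A →ₗ[R] B), Module.Flat R A → Module.Flat R B →
        ∀ (β : B →ₗ[R] M), β ∘ₗ g = 0 →
        ∃ (α' : A →ₗ[R] G) (β' : B →ₗ[R] F),
          ((LinearMap.ker φ).subtype ∘ₗ f) ∘ₗ α' = β' ∘ₗ g ∧ φ ∘ₗ β' = β) ∧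
    (∀ (α : G →ₗ[R] G) (β : F →ₗ[R] F),
        ((LinearMap.ker φ).subtype ∘ₗ f) ∘ₗ α = β ∘ₗ ((LinearMap.ker φ).subtype ∘ₗ f) →
        φ ∘ₗ β = φ → Function.Bijective α ∧ Function.Bijective β) :=
  stmt18_general M F G φ hprecov hcov f hG hprecov' hcov'
end
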